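/- Let ω be an A_1 weight on the unit circle, 0 < p < ∞, and let N be a sufficiently large positive integer (depending only on p and the doubling constant of ω, namely M/2^{Np+1} < 1). For a ∈ 𝔻 set f_a(z) = (1−|a|)^N/(1−āz)^{N+1/p}. Then there exist constants c, C > 0, independent of a, such that c·ω(I_a)/(1−|a|) ≤ ‖f_a‖_{H^p(ω)}^p ≤ C·ω(I_a)/(1−|a|), where I_a is the arc of length 1−|a| centered at a/|a|; equivalently, ∫_{∂𝔻} (1−|a|)^{Np}/|1−āξ|^{Np+1} ω(ξ)|dξ| ≍ ω(I_a)/|I_a| uniformly in a. -/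

import Mathlib

open MeasureTheory Set Filter
open scoped ENNReal Real

noncomputable section

/-- The point of the unit circle with angle `θ`. -/
def bpt (θ : ℝ) : ℂ := Complex.exp (θ * Complex.I)

/-- The open unit disk in the complex plane. -/
def unitDisk : Set ℂ := Metric.ball 0 1

/-- Normalized (by `1/(2π)`) integral of an `ℝ≥0∞`-valued function over the unit circle,
parametrized by angle. -/
def circInt (g : ℝ → ℝ≥0∞) : ℝ≥0∞ :=
  (ENNReal.ofReal (2 * π))⁻¹ * ∫⁻ θ in Set.Ioc 0 (2 * π), g θ

/-- `ω(I) = ∫_I ω(ξ)|dξ|` for the arc `I` with initial angle `a` and angular length `ℓ`. -/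
def wInt (ω : ℝ → ℝ) (a ℓ : ℝ) : ℝ≥0∞ :=
  ∫⁻ θ in Set.Ioo a (a + ℓ), ENNReal.ofReal (ω θ)

/-- `ω` is an `A₁` weight on the unit circle: it is `2π`-periodic, nonnegative, measurable, and
`(1/|I|)∫_I ω ≤ C · essinf_I ω` for every arc `I` (here `|I| = ℓ/(2π)` is the normalized length,
and all integrals over arcs are written in the angle variable). -/
def IsA1 (ω : ℝ → ℝ) : Prop :=
  Function.Periodic ω (2 * π) ∧ Measurable ω ∧ (∀ θ, 0 ≤ ω θ) ∧
  ∃ C : ℝ, 0 < C ∧ ∀ a ℓ : ℝ, 0 < ℓ → ℓ ≤ 2 * π →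
    wInt ω a ℓ ≤ ENNReal.ofReal (C * ℓ) *
      essInf (fun θ => ENNReal.ofReal (ω θ)) (volume.restrict (Set.Ioo a (a + ℓ)))

/-- `f` belongs to the classical Hardy space `H¹` of the unit disk. -/
def MemH1 (f : ℂ → ℂ) : Prop :=
  DifferentiableOn ℂ f unitDisk ∧
  ∃ C : ℝ, ∀ r : ℝ, 0 ≤ r → r < 1 →
    circInt (fun θ => ENNReal.ofReal (‖f ((r : ℂ) * bpt θ)‖)) ≤ ENNReal.ofReal C

/-- `fb` is the (a.e. defined) boundary-value function of `f` (radial limits a.e.). -/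
def HasBoundary (f : ℂ → ℂ) (fb : ℝ → ℂ) : Prop :=
  Measurable fb ∧
  ∀ᵐ θ : ℝ, Filter.Tendsto (fun r : ℝ => f ((r : ℂ) * bpt θ))
    (nhdsWithin 1 (Set.Iio 1)) (nhds (fb θ))

/-- The `p`-th power of the norm of a boundary function `fb` in `L^p(ω)`:
`(1/2π)∫_{∂𝔻} |fb|^p ω`. -/
def lpNormP (p : ℝ) (ω : ℝ → ℝ) (fb : ℝ → ℂ) : ℝ≥0∞ :=
  circInt fun θ => ENNReal.ofReal (‖fb θ‖ ^ p * ω θ)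

/-- The norm of a boundary function `fb` in `L^p(ω)` (equivalently, the `H^p(ω)` norm). -/
def wLpNorm (p : ℝ) (ω : ℝ → ℝ) (fb : ℝ → ℂ) : ℝ≥0∞ := lpNormP p ω fb ^ (1 / p)

/-- `f`, with boundary values `fb`, belongs to the weighted Hardy space `H^p(ω)`. -/
def MemHp (p : ℝ) (ω : ℝ → ℝ) (f : ℂ → ℂ) (fb : ℝ → ℂ) : Prop :=
  MemH1 f ∧ HasBoundary f fb ∧ lpNormP p ω fb < ⊤

/-- The norm of `f` in `L^q(dμ)` over the unit disk. -/
def lqMuNorm (q : ℝ) (μ : Measure ℂ) (f : ℂ → ℂ) : ℝ≥0∞ :=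
  (∫⁻ z in unitDisk, ENNReal.ofReal (‖f z‖) ^ q ∂μ) ^ (1 / q)

/-- The Carleson square over the arc with initial angle `a` and angular length `ℓ`
(whose normalized length is `|I| = ℓ/(2π)`). -/
def carleson (a ℓ : ℝ) : Set ℂ :=
  {z | z ∈ unitDisk ∧ 1 - ℓ / (2 * π) ≤ ‖z‖ ∧
    ∃ θ ∈ Set.Ioo a (a + ℓ), z = (‖z‖ : ℂ) * bpt θ}

/-- The nontangential approach region `Γ(ξ) = {z ∈ 𝔻 : |ξ - z| < 2(1-|z|)}`. -/
def stolz (ξ : ℂ) : Set ℂ := {z ∈ unitDisk | ‖ξ - z‖ < 2 * (1 - ‖z‖)}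

/-- The set `T(z) = {ξ ∈ ∂𝔻 : z ∈ Γ(ξ)}`, as a subset of the circle in `ℂ`. -/
def Tset (z : ℂ) : Set ℂ := {ξ | ‖ξ‖ = 1 ∧ z ∈ stolz ξ}

/-- `ν(T(z))` for a Borel measure `ν` on the unit circle. -/
def Tmeas (ν : Measure ℂ) (z : ℂ) : ℝ≥0∞ := ν (Tset z)

/-- `ω(T(z)) = ∫_{T(z)} ω(ξ)|dξ|`, in the angle variable. -/
def TmeasW (ω : ℝ → ℝ) (z : ℂ) : ℝ≥0∞ :=
  ∫⁻ θ in {θ : ℝ | θ ∈ Set.Ioc 0 (2 * π) ∧ z ∈ stolz (bpt θ)}, ENNReal.ofReal (ω θ)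

/-- The generalized area operator `A_{μ,ν} f(ξ) = ∫_{Γ(ξ)} |f(z)| dμ(z)/ν(T(z))`. -/
def areaOp (μ : Measure ℂ) (ν : Measure ℂ) (f : ℂ → ℂ) (θ : ℝ) : ℝ≥0∞ :=
  ∫⁻ z in stolz (bpt θ), ENNReal.ofReal (‖f z‖) / Tmeas ν z ∂μ

/-- The measure `dμ_ν^ω(z) = (ω(T(z))/ν(T(z))) dμ(z)`. -/
def muNuOmega (μ : Measure ℂ) (ν : Measure ℂ) (ω : ℝ → ℝ) : Measure ℂ :=
  μ.withDensity fun z => TmeasW ω z / Tmeas ν z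

/-- The arc `I_z` (of angular width `1-|z|`, centered at `z/|z|`) is contained, modulo `2π`,
in the arc with initial angle `a` and angular length `ℓ`. -/
def IzSub (z : ℂ) (a ℓ : ℝ) : Prop :=
  ∃ k : ℤ, a ≤ Complex.arg z - (1 - ‖z‖) / 2 + 2 * π * k ∧
    Complex.arg z + (1 - ‖z‖) / 2 + 2 * π * k ≤ a + ℓ

/-- The weighted maximal function `M_ω g(z) = sup_{I ⊇ I_z} (1/ω(I))∫_I |g| ω`. -/
def maxFn (ω : ℝ → ℝ) (g : ℝ → ℂ) (z : ℂ) : ℝ≥0∞ :=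
  ⨆ (a : ℝ) (ℓ : ℝ) (_ : 0 < ℓ ∧ ℓ ≤ 2 * π ∧ IzSub z a ℓ),
    (∫⁻ θ in Set.Ioo a (a + ℓ), ENNReal.ofReal (‖g θ‖ * ω θ)) / wInt ω a ℓ

/-- `M_{ω,α}(μ)(z) = sup_{I ⊇ I_z} μ(S(I))/ω(I)^α`. -/
def maxCarl (ω : ℝ → ℝ) (α : ℝ) (μ : Measure ℂ) (z : ℂ) : ℝ≥0∞ :=
  ⨆ (a : ℝ) (ℓ : ℝ) (_ : 0 < ℓ ∧ ℓ ≤ 2 * π ∧ IzSub z a ℓ),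
    μ (carleson a ℓ) / wInt ω a ℓ ^ α

/-- `μ̃_ω(ξ) = (1/(2πω(ξ))) ∫_𝔻 (1-|z|²)/|ξ-z|² dμ(z)`. -/
def tildeMu (μ : Measure ℂ) (ω : ℝ → ℝ) (θ : ℝ) : ℝ≥0∞ :=
  (ENNReal.ofReal (2 * π * ω θ))⁻¹ *
    ∫⁻ z in unitDisk, ENNReal.ofReal ((1 - ‖z‖ ^ 2) / ‖bpt θ - z‖ ^ 2) ∂μ

/-- `μ̂_ω(ξ) = (1/ω(ξ)) ∫_{Γ(ξ)} dμ(z)/(1-|z|)`. -/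
def hatMu (μ : Measure ℂ) (ω : ℝ → ℝ) (θ : ℝ) : ℝ≥0∞ :=
  (ENNReal.ofReal (ω θ))⁻¹ *
    ∫⁻ z in stolz (bpt θ), ENNReal.ofReal ((1 - ‖z‖)⁻¹) ∂μ


/-!
With `δ = 1 - |a|` and `q = Np + 1`, `|f_a(e^{iθ})|^p = δ^{q-1}/|1 - |a|e^{i(θ - arg a)}|^q`, and on
the period window centred at `arg a` the denominator is comparable to `δ + |θ - arg a|`. On the
arc `I_a` the kernel is `≳ 1/δ`, which gives the lower bound. For the upper bound the kernel is
dominated by `Σ_k 4^q 2^{-kq} δ⁻¹ · 1_{2^k I_a}`, and doubling gives `ω(2^k I_a) ≤ M^k ω(I_a)`, so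
the resulting series is geometric with ratio `M/2^q < 1`.
-/

open Metric

lemma rpow_kernel_le {δ d q : ℝ} (hδ : 0 < δ) (hq : 0 ≤ q) {k : ℕ}
    (hk : 2 ^ k * δ ≤ 4 * (δ + d)) :
    δ ^ (q - 1) / (δ + d) ^ q ≤ 4 ^ q / δ * ((2 ^ q)⁻¹) ^ k := by
  have h2k : (2 ^ k * δ / 4) ^ q = (2 ^ q) ^ k * δ ^ q / 4 ^ q := by
    rw [Real.div_rpow (by positivity) (by norm_num), Real.mul_rpow (by positivity) hδ.le,
      ← Real.rpow_natCast, ← Real.rpow_natCast, ← Real.rpow_mul (by norm_num),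
      ← Real.rpow_mul (by norm_num), mul_comm (k : ℝ) q]
  calc δ ^ (q - 1) / (δ + d) ^ q ≤ δ ^ (q - 1) / (2 ^ k * δ / 4) ^ q := by
        gcongr
        linarith
    _ = 4 ^ q / δ * ((2 ^ q)⁻¹) ^ k := by
        rw [h2k, Real.rpow_sub_one hδ.ne', inv_pow]
        field_simp

lemma exists_two_pow_mul_half_gt_and_le {δ d : ℝ} (hδ : 0 < δ) (hd : 0 ≤ d) :
    ∃ k : ℕ, d < 2 ^ k * (δ / 2) ∧ 2 ^ k * δ ≤ 4 * (δ + d) := by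
  have hex : ∃ k : ℕ, d < 2 ^ k * (δ / 2) := by
    obtain ⟨k, hk⟩ := pow_unbounded_of_one_lt (d / (δ / 2)) one_lt_two
    exact ⟨k, (div_lt_iff₀ (by positivity)).1 hk⟩
  refine ⟨Nat.find hex, Nat.find_spec hex, ?_⟩
  rcases hk : Nat.find hex with _ | k
  · linarith
  · have := Nat.find_min hex (hk ▸ k.lt_succ_self : k < Nat.find hex)
    rw [pow_succ]
    replace := not_lt.1 this
    linarith

section DoublingKernel

variable {X : Type*} [PseudoMetricSpace X]

lemma rpow_kernel_le_tsum_indicator (x y : X) {δ q : ℝ} (hδ : 0 < δ) (hq : 0 ≤ q) :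
    ENNReal.ofReal (δ ^ (q - 1) / (δ + dist y x) ^ q) ≤
      ∑' k : ℕ, ENNReal.ofReal (4 ^ q / δ * ((2 ^ q)⁻¹) ^ k) *
        (ball x (2 ^ k * (δ / 2))).indicator 1 y := by
  obtain ⟨k, hk_mem, hk⟩ := exists_two_pow_mul_half_gt_and_le hδ (dist_nonneg : 0 ≤ dist y x)
  refine le_trans ?_ (ENNReal.le_tsum k)
  rw [indicator_of_mem (mem_ball.2 hk_mem), Pi.one_apply, mul_one]
  exact ENNReal.ofReal_le_ofReal (rpow_kernel_le hδ hq hk)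

variable [MeasurableSpace X]

lemma measure_ball_two_pow_mul_le (ν : Measure X) (x : X) {D : ℝ≥0∞} {r : ℝ} (hr : 0 < r)
    (hD : ∀ t > 0, ν (ball x (2 * t)) ≤ D * ν (ball x t)) (k : ℕ) :
    ν (ball x (2 ^ k * r)) ≤ D ^ k * ν (ball x r) := by
  induction k with
  | zero => simp
  | succ k ih =>
    calc ν (ball x (2 ^ (k + 1) * r)) = ν (ball x (2 * (2 ^ k * r))) := by ring_nf
      _ ≤ D * ν (ball x (2 ^ k * r)) := hD _ (by positivity)
      _ ≤ D * (D ^ k * ν (ball x r)) := by gcongr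
      _ = D ^ (k + 1) * ν (ball x r) := by ring

variable [OpensMeasurableSpace X]

theorem lintegral_rpow_kernel_le_of_doubling (ν : Measure X) (x : X) {D q δ : ℝ}
    (hD0 : 0 ≤ D) (hDq : D < 2 ^ q) (hq : 0 ≤ q) (hδ : 0 < δ)
    (hD : ∀ t > 0, ν (ball x (2 * t)) ≤ ENNReal.ofReal D * ν (ball x t)) :
    ∫⁻ y, ENNReal.ofReal (δ ^ (q - 1) / (δ + dist y x) ^ q) ∂ν ≤
      ENNReal.ofReal (4 ^ q / (1 - D / 2 ^ q)) * (ν (ball x (δ / 2)) / ENNReal.ofReal δ) := by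
  have h2q : 0 < (2 : ℝ) ^ q := by positivity
  have hρ0 : 0 ≤ D / 2 ^ q := by positivity
  have hρ1 : D / 2 ^ q < 1 := (div_lt_one h2q).2 hDq
  have hcoeff : ∀ k : ℕ, ENNReal.ofReal (4 ^ q / δ * ((2 ^ q)⁻¹) ^ k) * ENNReal.ofReal D ^ k =
      ENNReal.ofReal (4 ^ q / δ * (D / 2 ^ q) ^ k) := fun k => by
    rw [← ENNReal.ofReal_pow hD0, ← ENNReal.ofReal_mul (by positivity), mul_assoc, ← mul_pow,
      inv_mul_eq_div]
  calc ∫⁻ y, ENNReal.ofReal (δ ^ (q - 1) / (δ + dist y x) ^ q) ∂ν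
      ≤ ∫⁻ y, ∑' k : ℕ, ENNReal.ofReal (4 ^ q / δ * ((2 ^ q)⁻¹) ^ k) *
          (ball x (2 ^ k * (δ / 2))).indicator 1 y ∂ν :=
        lintegral_mono fun y => rpow_kernel_le_tsum_indicator x y hδ hq
    _ = ∑' k : ℕ, ENNReal.ofReal (4 ^ q / δ * ((2 ^ q)⁻¹) ^ k) * ν (ball x (2 ^ k * (δ / 2))) := by
        rw [lintegral_tsum fun k => ((measurable_one.indicator measurableSet_ball).const_mul
          _).aemeasurable]
        congr 1 with k
        rw [lintegral_const_mul _ (measurable_one.indicator measurableSet_ball),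
          lintegral_indicator_one measurableSet_ball]
    _ ≤ ∑' k : ℕ, ENNReal.ofReal (4 ^ q / δ * (D / 2 ^ q) ^ k) * ν (ball x (δ / 2)) := by
        refine ENNReal.tsum_le_tsum fun k => ?_
        rw [← hcoeff, mul_assoc]
        gcongr
        exact measure_ball_two_pow_mul_le ν x (by positivity) hD k
    _ = ENNReal.ofReal (4 ^ q / (1 - D / 2 ^ q)) * (ν (ball x (δ / 2)) / ENNReal.ofReal δ) := by
        rw [ENNReal.tsum_mul_right, ← ENNReal.ofReal_tsum_of_nonneg (fun k => by positivity)
          ((summable_geometric_of_lt_one hρ0 hρ1).mul_left _), tsum_mul_left,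
          tsum_geometric_of_lt_one hρ0 hρ1, ENNReal.div_eq_inv_mul, ← mul_assoc,
          ← ENNReal.ofReal_inv_of_pos hδ,
          ← ENNReal.ofReal_mul (div_nonneg (by positivity) (by linarith))]
        congr 2
        ring

end DoublingKernel

lemma norm_one_sub_ofReal_mul_exp_sq (r s : ℝ) :
    ‖1 - (r : ℂ) * Complex.exp (s * Complex.I)‖ ^ 2 = (1 - r) ^ 2 + 2 * r * (1 - Real.cos s) := by
  rw [Complex.sq_norm, Complex.normSq_apply]
  simp only [Complex.sub_re, Complex.sub_im, Complex.mul_re, Complex.mul_im,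
    Complex.one_re, Complex.one_im, Complex.ofReal_re, Complex.ofReal_im,
    Complex.exp_ofReal_mul_I_re, Complex.exp_ofReal_mul_I_im]
  linear_combination r ^ 2 * Real.sin_sq_add_cos_sq s

lemma one_sub_le_norm_one_sub_ofReal_mul_exp {r : ℝ} (hr0 : 0 ≤ r) (s : ℝ) :
    1 - r ≤ ‖1 - (r : ℂ) * Complex.exp (s * Complex.I)‖ := by
  simpa [abs_of_nonneg hr0, Complex.norm_exp_ofReal_mul_I] using
    norm_sub_norm_le (1 : ℂ) ((r : ℂ) * Complex.exp (s * Complex.I))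

lemma norm_one_sub_ofReal_mul_exp_le {r : ℝ} (hr0 : 0 ≤ r) (hr1 : r ≤ 1) (s : ℝ) :
    ‖1 - (r : ℂ) * Complex.exp (s * Complex.I)‖ ≤ (1 - r) + |s| := by
  refine abs_le_of_sq_le_sq' ?_ (by positivity) |>.2
  rw [norm_one_sub_ofReal_mul_exp_sq]
  nlinarith [Real.one_sub_sq_div_two_le_cos (x := s), Real.cos_le_one s, abs_nonneg s, sq_abs s]

lemma le_norm_one_sub_ofReal_mul_exp {r : ℝ} (hr0 : 0 ≤ r) (hr1 : r < 1) {s : ℝ} (hs : |s| ≤ π) :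
    ((1 - r) + |s|) / 9 ≤ ‖1 - (r : ℂ) * Complex.exp (s * Complex.I)‖ := by
  rcases le_or_gt (1 / 2 : ℝ) r with hr | hr
  · refine abs_le_of_sq_le_sq' ?_ (norm_nonneg _) |>.2
    rw [norm_one_sub_ofReal_mul_exp_sq]
    -- Jordan-type bound `1 - cos s ≥ 2 s² / π²`, and `π² ≤ 10`
    have hcos := Real.cos_le_one_sub_mul_cos_sq hs
    have hπ : 1 / 5 ≤ 2 / π ^ 2 := by
      rw [div_le_div_iff₀ (by norm_num) (by positivity)]
      nlinarith [Real.pi_lt_d2, Real.pi_pos]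
    have hc0 : 0 ≤ 1 - Real.cos s := by linarith [Real.cos_le_one s]
    have hu : s ^ 2 / 5 ≤ 2 * r * (1 - Real.cos s) := by
      nlinarith [mul_le_mul_of_nonneg_right hπ (sq_nonneg s)]
    nlinarith [sq_nonneg ((1 - r) - |s|), sq_abs s, abs_nonneg s]
  · have := one_sub_le_norm_one_sub_ofReal_mul_exp hr0 s
    linarith [Real.pi_lt_d2]

lemma Function.Periodic.setLIntegral_Ioc_add_eq {g : ℝ → ℝ≥0∞} {T : ℝ} (hT : 0 < T)
    (hg : Function.Periodic g T) (s t : ℝ) :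
    ∫⁻ x in Ioc s (s + T), g x = ∫⁻ x in Ioc t (t + T), g x := by
  have := Fact.mk hT
  have hlift : g = fun x : ℝ => hg.lift (x : AddCircle T) := funext fun x => (hg.lift_coe x).symm
  rw [hlift, AddCircle.lintegral_preimage, AddCircle.lintegral_preimage]

lemma lpNormP_eq_setLIntegral_Ioc {p : ℝ} {ω : ℝ → ℝ} {fb : ℝ → ℂ}
    (hfb : Function.Periodic fb (2 * π)) (hω : Function.Periodic ω (2 * π)) (c : ℝ) :
    lpNormP p ω fb = (ENNReal.ofReal (2 * π))⁻¹ *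
      ∫⁻ θ in Ioc c (c + 2 * π), ENNReal.ofReal (‖fb θ‖ ^ p) * ENNReal.ofReal (ω θ) := by
  have hper : Function.Periodic (fun θ => ENNReal.ofReal (‖fb θ‖ ^ p * ω θ)) (2 * π) :=
    fun θ => by simp only [hfb θ, hω θ]
  rw [lpNormP, circInt, ← zero_add (2 * π), hper.setLIntegral_Ioc_add_eq (by positivity) 0 c,
    zero_add]
  simp only [ENNReal.ofReal_mul (Real.rpow_nonneg (norm_nonneg _) _)]

/-- The boundary values `θ ↦ f_a(e^{iθ})` of `f_a(z) = (1-|a|)^N/(1 - conj(a)·z)^{N+1/p}`. -/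
def testFn (N : ℕ) (p : ℝ) (a : ℂ) (θ : ℝ) : ℂ :=
  (((1 - ‖a‖) ^ N : ℝ) : ℂ) / (1 - (starRingEnd ℂ) a * bpt θ) ^ ((N : ℂ) + 1 / (p : ℂ))

lemma bpt_periodic : Function.Periodic bpt (2 * π) := fun θ => by
  simp only [bpt]
  rw [show ((θ + 2 * π : ℝ) : ℂ) * Complex.I = θ * Complex.I + 2 * π * Complex.I by push_cast; ring,
    Complex.exp_add, Complex.exp_two_pi_mul_I, mul_one]

lemma testFn_periodic (N : ℕ) (p : ℝ) (a : ℂ) : Function.Periodic (testFn N p a) (2 * π) :=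
  fun θ => by simp only [testFn, bpt_periodic θ]

lemma conj_mul_bpt (a : ℂ) (θ : ℝ) :
    (starRingEnd ℂ) a * bpt θ = (‖a‖ : ℂ) * Complex.exp ((θ - Complex.arg a : ℝ) * Complex.I) := by
  conv_lhs => rw [← Complex.norm_mul_exp_arg_mul_I a]
  rw [map_mul, ← Complex.exp_conj, Complex.conj_ofReal, map_mul, Complex.conj_ofReal,
    Complex.conj_I, bpt, mul_assoc, ← Complex.exp_add]
  push_cast
  ring_nf

lemma norm_testFn_rpow {N : ℕ} {p q : ℝ} (hp : 0 < p) (hq : (N : ℝ) * p + 1 = q) {a : ℂ}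
    (ha : ‖a‖ < 1) (θ : ℝ) :
    ‖testFn N p a θ‖ ^ p = (1 - ‖a‖) ^ (q - 1) /
      ‖1 - (‖a‖ : ℂ) * Complex.exp ((θ - Complex.arg a : ℝ) * Complex.I)‖ ^ q := by
  have hδ : 0 < 1 - ‖a‖ := by linarith
  set w := 1 - (‖a‖ : ℂ) * Complex.exp ((θ - Complex.arg a : ℝ) * Complex.I)
  have hw : 0 < ‖w‖ :=
    hδ.trans_le (one_sub_le_norm_one_sub_ofReal_mul_exp (norm_nonneg a) _)
  have hexp : (N : ℂ) + 1 / (p : ℂ) = ((N + 1 / p : ℝ) : ℂ) := by push_cast; ring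
  rw [testFn, conj_mul_bpt, hexp, norm_div, Complex.norm_real, Real.norm_eq_abs,
    Complex.norm_cpow_real, abs_of_nonneg (by positivity),
    Real.div_rpow (by positivity) (by positivity), ← Real.rpow_natCast,
    ← Real.rpow_mul hδ.le, ← Real.rpow_mul hw.le, ← hq]
  congr 2
  · ring
  · field_simp

lemma rpow_kernel_le_rpow_norm {r q : ℝ} (hr0 : 0 ≤ r) (hr1 : r < 1) (hq : 0 ≤ q) (s : ℝ) :
    (1 - r) ^ (q - 1) / ((1 - r) + |s|) ^ q ≤
      (1 - r) ^ (q - 1) / ‖1 - (r : ℂ) * Complex.exp (s * Complex.I)‖ ^ q := by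
  have hpos := (sub_pos.2 hr1).trans_le (one_sub_le_norm_one_sub_ofReal_mul_exp hr0 s)
  gcongr
  exact norm_one_sub_ofReal_mul_exp_le hr0 hr1.le s

lemma rpow_norm_le_rpow_kernel {r q : ℝ} (hr0 : 0 ≤ r) (hr1 : r < 1) (hq : 0 ≤ q) {s : ℝ}
    (hs : |s| ≤ π) :
    (1 - r) ^ (q - 1) / ‖1 - (r : ℂ) * Complex.exp (s * Complex.I)‖ ^ q ≤
      9 ^ q * ((1 - r) ^ (q - 1) / ((1 - r) + |s|) ^ q) := by
  have hpos : 0 < (1 - r) + |s| := by positivity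
  calc (1 - r) ^ (q - 1) / ‖1 - (r : ℂ) * Complex.exp (s * Complex.I)‖ ^ q
      ≤ (1 - r) ^ (q - 1) / (((1 - r) + |s|) / 9) ^ q := by
        gcongr
        exact le_norm_one_sub_ofReal_mul_exp hr0 hr1 hs
    _ = 9 ^ q * ((1 - r) ^ (q - 1) / ((1 - r) + |s|) ^ q) := by
        rw [Real.div_rpow hpos.le (by norm_num)]
        field_simp

lemma ofReal_rpow_mul_wInt_le_setLIntegral (ω : ℝ → ℝ) {q δ : ℝ} (hq : 0 ≤ q) (hδ : 0 < δ)
    (φ : ℝ) :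
    ENNReal.ofReal ((2 / 3) ^ q) * (wInt ω (φ - δ / 2) δ / ENNReal.ofReal δ) ≤
      ∫⁻ θ in Ioo (φ - δ / 2) (φ - δ / 2 + δ),
        ENNReal.ofReal (δ ^ (q - 1) / (δ + |θ - φ|) ^ q) * ENNReal.ofReal (ω θ) := by
  have hkernel : ∀ θ ∈ Ioo (φ - δ / 2) (φ - δ / 2 + δ),
      (2 / 3) ^ q / δ ≤ δ ^ (q - 1) / (δ + |θ - φ|) ^ q := fun θ ⟨h₁, h₂⟩ => by
    have hclose : δ + |θ - φ| ≤ 3 / 2 * δ := by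
      linarith [abs_sub_lt_iff.2 (⟨by linarith, by linarith⟩ : θ - φ < δ / 2 ∧ φ - θ < δ / 2)]
    calc (2 / 3) ^ q / δ = δ ^ (q - 1) / (3 / 2 * δ) ^ q := by
          rw [Real.mul_rpow (by norm_num) hδ.le, Real.rpow_sub_one hδ.ne',
            Real.div_rpow (by norm_num) (by norm_num), Real.div_rpow (by norm_num) (by norm_num)]
          field_simp
      _ ≤ δ ^ (q - 1) / (δ + |θ - φ|) ^ q := by gcongr
  calc ENNReal.ofReal ((2 / 3) ^ q) * (wInt ω (φ - δ / 2) δ / ENNReal.ofReal δ)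
      = ∫⁻ θ in Ioo (φ - δ / 2) (φ - δ / 2 + δ),
          ENNReal.ofReal ((2 / 3) ^ q / δ) * ENNReal.ofReal (ω θ) := by
        rw [lintegral_const_mul' _ _ ENNReal.ofReal_ne_top, ← wInt,
          ENNReal.ofReal_div_of_pos hδ, ENNReal.div_eq_inv_mul, ENNReal.div_eq_inv_mul]
        ring
    _ ≤ _ := setLIntegral_mono' measurableSet_Ioo fun θ hθ => by
        gcongr ENNReal.ofReal ?_ * _
        exact hkernel θ hθ

lemma withDensity_ball_eq_wInt (ω : ℝ → ℝ) (φ t : ℝ) :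
    volume.withDensity (fun θ => ENNReal.ofReal (ω θ)) (ball φ t) = wInt ω (φ - t) (2 * t) := by
  rw [withDensity_apply _ measurableSet_ball, Real.ball_eq_Ioo, wInt,
    show φ - t + 2 * t = φ + t by ring]

lemma withDensity_restrict_ball_pi_doubling {ω : ℝ → ℝ} {M : ℝ}
    (hM : ∀ a ℓ : ℝ, 0 < ℓ → 2 * ℓ ≤ 2 * π →
      wInt ω (a - ℓ / 2) (2 * ℓ) ≤ ENNReal.ofReal M * wInt ω a ℓ) (φ : ℝ) {t : ℝ} (ht : 0 < t) :
    (volume.withDensity fun θ => ENNReal.ofReal (ω θ)).restrict (ball φ π) (ball φ (2 * t)) ≤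
      ENNReal.ofReal M *
        (volume.withDensity fun θ => ENNReal.ofReal (ω θ)).restrict (ball φ π) (ball φ t) := by
  set μ := volume.withDensity fun θ => ENNReal.ofReal (ω θ)
  -- beyond the scale `π / 2` the doubling is applied only once, to the whole window
  set s := min t (π / 2) with hs_def
  have hs : 0 < s := lt_min ht (by positivity)
  rw [Measure.restrict_apply measurableSet_ball, Measure.restrict_apply measurableSet_ball]
  calc μ (ball φ (2 * t) ∩ ball φ π) ≤ μ (ball φ (2 * s)) := by
        refine measure_mono fun θ ⟨h₁, h₂⟩ => ?_
        rw [mem_ball] at h₁ h₂ ⊢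
        rcases min_cases t (π / 2) with ⟨h, -⟩ | ⟨h, -⟩ <;> rw [hs_def, h] <;> linarith
    _ = wInt ω (φ - s - 2 * s / 2) (2 * (2 * s)) := by
        rw [withDensity_ball_eq_wInt]; ring_nf
    _ ≤ ENNReal.ofReal M * wInt ω (φ - s) (2 * s) :=
        hM _ _ (by positivity) (by linarith [min_le_right t (π / 2)])
    _ = ENNReal.ofReal M * μ (ball φ s) := by rw [withDensity_ball_eq_wInt]
    _ ≤ ENNReal.ofReal M * μ (ball φ t ∩ ball φ π) := by
        gcongr
        exact subset_inter (ball_subset_ball (min_le_left _ _))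
          (ball_subset_ball ((min_le_right _ _).trans (by linarith [Real.pi_pos])))

lemma setLIntegral_ball_rpow_kernel_mul_le {ω : ℝ → ℝ} (hωm : Measurable ω) {M : ℝ}
    (hM : ∀ a ℓ : ℝ, 0 < ℓ → 2 * ℓ ≤ 2 * π →
      wInt ω (a - ℓ / 2) (2 * ℓ) ≤ ENNReal.ofReal M * wInt ω a ℓ)
    {q δ : ℝ} (hq : 0 ≤ q) (hMq : max M 0 < 2 ^ q) (hδ : 0 < δ) (hδπ : δ ≤ 2 * π) (φ : ℝ) :
    ∫⁻ θ in ball φ π, ENNReal.ofReal (δ ^ (q - 1) / (δ + |θ - φ|) ^ q) * ENNReal.ofReal (ω θ) ≤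
      ENNReal.ofReal (4 ^ q / (1 - max M 0 / 2 ^ q)) *
        (wInt ω (φ - δ / 2) δ / ENNReal.ofReal δ) := by
  set μ := volume.withDensity fun θ => ENNReal.ofReal (ω θ)
  have hkernel : Measurable fun θ : ℝ => ENNReal.ofReal (δ ^ (q - 1) / (δ + |θ - φ|) ^ q) := by
    fun_prop
  have hbound := lintegral_rpow_kernel_le_of_doubling (μ.restrict (ball φ π)) φ
    (le_max_right M 0) hMq hq hδ
    fun t ht => (withDensity_restrict_ball_pi_doubling hM φ ht).trans (by gcongr; exact le_max_left M 0)
  have hball : μ.restrict (ball φ π) (ball φ (δ / 2)) = wInt ω (φ - δ / 2) δ := by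
    rw [Measure.restrict_apply measurableSet_ball,
      inter_eq_left.2 (ball_subset_ball (by linarith)), withDensity_ball_eq_wInt]
    ring_nf
  calc _ = ∫⁻ θ in ball φ π, ENNReal.ofReal (δ ^ (q - 1) / (δ + dist θ φ) ^ q) ∂μ := by
        simp only [Real.dist_eq]
        rw [setLIntegral_withDensity_eq_setLIntegral_mul _ hωm.ennreal_ofReal hkernel
          measurableSet_ball]
        simp only [Pi.mul_apply, mul_comm]
    _ ≤ _ := hball ▸ hbound

lemma lpNormP_testFn_eq {ω : ℝ → ℝ} (hper : Function.Periodic ω (2 * π)) {N : ℕ} {p q : ℝ}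
    (hp : 0 < p) (hq : (N : ℝ) * p + 1 = q) {a : ℂ} (ha : ‖a‖ < 1) :
    lpNormP p ω (testFn N p a) = (ENNReal.ofReal (2 * π))⁻¹ *
      ∫⁻ θ in Ioc (Complex.arg a - π) (Complex.arg a + π),
        ENNReal.ofReal ((1 - ‖a‖) ^ (q - 1) /
          ‖1 - (‖a‖ : ℂ) * Complex.exp ((θ - Complex.arg a : ℝ) * Complex.I)‖ ^ q) *
        ENNReal.ofReal (ω θ) := by
  rw [lpNormP_eq_setLIntegral_Ioc (testFn_periodic N p a) hper (Complex.arg a - π),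
    show Complex.arg a - π + 2 * π = Complex.arg a + π by ring]
  simp only [norm_testFn_rpow hp hq ha]

lemma ofReal_mul_wInt_le_lpNormP_testFn {ω : ℝ → ℝ} (hper : Function.Periodic ω (2 * π))
    {N : ℕ} {p q : ℝ} (hp : 0 < p) (hq : (N : ℝ) * p + 1 = q) {a : ℂ} (ha : ‖a‖ < 1) :
    ENNReal.ofReal ((2 / 3) ^ q / (2 * π)) *
        (wInt ω (Complex.arg a - (1 - ‖a‖) / 2) (1 - ‖a‖) / ENNReal.ofReal (1 - ‖a‖)) ≤
      lpNormP p ω (testFn N p a) := by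
  set φ := Complex.arg a
  set δ := 1 - ‖a‖
  have hδ : 0 < δ := by linarith
  have hq0 : 0 ≤ q := by rw [← hq]; positivity
  rw [lpNormP_testFn_eq hper hp hq ha, ENNReal.ofReal_div_of_pos (by positivity),
    ENNReal.div_eq_inv_mul, mul_assoc]
  gcongr _ * ?_
  calc ENNReal.ofReal ((2 / 3) ^ q) * (wInt ω (φ - δ / 2) δ / ENNReal.ofReal δ)
      ≤ ∫⁻ θ in Ioo (φ - δ / 2) (φ - δ / 2 + δ),
          ENNReal.ofReal (δ ^ (q - 1) / (δ + |θ - φ|) ^ q) * ENNReal.ofReal (ω θ) :=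
        ofReal_rpow_mul_wInt_le_setLIntegral ω hq0 hδ φ
    _ ≤ ∫⁻ θ in Ioo (φ - δ / 2) (φ - δ / 2 + δ),
          ENNReal.ofReal (δ ^ (q - 1) /
            ‖1 - (‖a‖ : ℂ) * Complex.exp ((θ - φ : ℝ) * Complex.I)‖ ^ q) *
          ENNReal.ofReal (ω θ) := by
        refine setLIntegral_mono' measurableSet_Ioo fun θ _ => ?_
        gcongr ENNReal.ofReal ?_ * _
        exact rpow_kernel_le_rpow_norm (norm_nonneg a) ha hq0 _
    _ ≤ _ := by
        refine lintegral_mono_set (Ioo_subset_Ioc_self.trans (Ioc_subset_Ioc ?_ ?_)) <;>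
          linarith [Real.pi_gt_three, norm_nonneg a]

lemma lpNormP_testFn_le {ω : ℝ → ℝ} (hper : Function.Periodic ω (2 * π)) (hωm : Measurable ω)
    {M : ℝ} (hM : ∀ a ℓ : ℝ, 0 < ℓ → 2 * ℓ ≤ 2 * π →
      wInt ω (a - ℓ / 2) (2 * ℓ) ≤ ENNReal.ofReal M * wInt ω a ℓ)
    {N : ℕ} {p q : ℝ} (hp : 0 < p) (hq : (N : ℝ) * p + 1 = q) (hMq : max M 0 < 2 ^ q)
    {a : ℂ} (ha : ‖a‖ < 1) :
    lpNormP p ω (testFn N p a) ≤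
      ENNReal.ofReal (9 ^ q * (4 ^ q / (1 - max M 0 / 2 ^ q)) / (2 * π)) *
        (wInt ω (Complex.arg a - (1 - ‖a‖) / 2) (1 - ‖a‖) / ENNReal.ofReal (1 - ‖a‖)) := by
  set φ := Complex.arg a
  set δ := 1 - ‖a‖
  have hδ : 0 < δ := by linarith
  have hq0 : 0 ≤ q := by rw [← hq]; positivity
  have hρ : 0 < 1 - max M 0 / 2 ^ q := sub_pos.2 ((div_lt_one (by positivity)).2 hMq)
  rw [lpNormP_testFn_eq hper hp hq ha, ← setLIntegral_congr Ioo_ae_eq_Ioc, ← Real.ball_eq_Ioo]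
  calc (ENNReal.ofReal (2 * π))⁻¹ * ∫⁻ θ in ball φ π, ENNReal.ofReal (δ ^ (q - 1) /
          ‖1 - (‖a‖ : ℂ) * Complex.exp ((θ - φ : ℝ) * Complex.I)‖ ^ q) * ENNReal.ofReal (ω θ)
      ≤ (ENNReal.ofReal (2 * π))⁻¹ * ∫⁻ θ in ball φ π, ENNReal.ofReal (9 ^ q) *
          (ENNReal.ofReal (δ ^ (q - 1) / (δ + |θ - φ|) ^ q) * ENNReal.ofReal (ω θ)) := by
        gcongr _ * ?_
        refine setLIntegral_mono' measurableSet_ball fun θ hθ => ?_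
        rw [← mul_assoc, ← ENNReal.ofReal_mul (by positivity : (0 : ℝ) ≤ 9 ^ q)]
        gcongr ENNReal.ofReal ?_ * _
        exact rpow_norm_le_rpow_kernel (norm_nonneg a) ha hq0 (mem_ball.1 hθ).le
    _ ≤ (ENNReal.ofReal (2 * π))⁻¹ * (ENNReal.ofReal (9 ^ q) *
          (ENNReal.ofReal (4 ^ q / (1 - max M 0 / 2 ^ q)) *
            (wInt ω (φ - δ / 2) δ / ENNReal.ofReal δ))) := by
        rw [lintegral_const_mul' _ _ ENNReal.ofReal_ne_top]
        gcongr
        exact setLIntegral_ball_rpow_kernel_mul_le hωm hM hq0 hMq hδ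
          (by linarith [Real.pi_gt_three, norm_nonneg a]) φ
    _ = _ := by
        rw [ENNReal.ofReal_div_of_pos (by positivity : (0 : ℝ) < 2 * π),
          ENNReal.ofReal_mul (by positivity : (0 : ℝ) ≤ 9 ^ q)]
        simp only [ENNReal.div_eq_inv_mul]
        ac_rfl

theorem test_function_two_sided_estimate_general
    (ω : ℝ → ℝ) (M p : ℝ) (N : ℕ) (hω : IsA1 ω) (hp : 0 < p)
    (hM : ∀ a ℓ : ℝ, 0 < ℓ → 2 * ℓ ≤ 2 * π →
      wInt ω (a - ℓ / 2) (2 * ℓ) ≤ ENNReal.ofReal M * wInt ω a ℓ)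
    (hMN : M / 2 ^ ((N : ℝ) * p + 1) < 1) :
    ∃ c C : ℝ, 0 < c ∧ 0 < C ∧ ∀ a : ℂ, a ∈ unitDisk →
      ENNReal.ofReal c *
          (wInt ω (Complex.arg a - (1 - ‖a‖) / 2) (1 - ‖a‖) /
            ENNReal.ofReal (1 - ‖a‖)) ≤
        lpNormP p ω (fun θ =>
          ((((1 - ‖a‖) ^ N : ℝ) : ℂ) /
            (1 - (starRingEnd ℂ) a * bpt θ) ^ ((N : ℂ) + 1 / (p : ℂ)))) ∧
      lpNormP p ω (fun θ =>
          ((((1 - ‖a‖) ^ N : ℝ) : ℂ) /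
            (1 - (starRingEnd ℂ) a * bpt θ) ^ ((N : ℂ) + 1 / (p : ℂ)))) ≤
        ENNReal.ofReal C *
          (wInt ω (Complex.arg a - (1 - ‖a‖) / 2) (1 - ‖a‖) /
            ENNReal.ofReal (1 - ‖a‖)) := by
  obtain ⟨hper, hωm, -, -⟩ := hω
  set q := (N : ℝ) * p + 1 with hq
  have h2q : 0 < (2 : ℝ) ^ q := by positivity
  have hMq : max M 0 < 2 ^ q := max_lt ((div_lt_one h2q).1 hMN) h2q
  have hρ : 0 < 1 - max M 0 / 2 ^ q := sub_pos.2 ((div_lt_one h2q).2 hMq)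
  refine ⟨(2 / 3) ^ q / (2 * π), 9 ^ q * (4 ^ q / (1 - max M 0 / 2 ^ q)) / (2 * π),
    by positivity, by positivity, fun a ha => ?_⟩
  have ha' : ‖a‖ < 1 := mem_ball_zero_iff.1 ha
  exact ⟨ofReal_mul_wInt_le_lpNormP_testFn hper hp hq.symm ha',
    lpNormP_testFn_le hper hωm hM hp hq.symm hMq ha'⟩

/-- The test-function estimate in the proof of Theorem 1.4: for `ω ∈ A₁` with doubling
constant `M`, `0 < p < ∞` and a positive integer `N` with `M/2^{Np+1} < 1`, the functions
`f_a(z) = (1-|a|)^N/(1 - conj(a)·z)^{N+1/p}` satisfy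
`‖f_a‖_{H^p(ω)}^p ≍ ω(I_a)/(1-|a|)` uniformly in `a ∈ 𝔻`. -/
theorem test_function_two_sided_estimate
    (ω : ℝ → ℝ) (M p : ℝ) (N : ℕ) (hω : IsA1 ω) (hp : 0 < p) (hN : 0 < N)
    (hM : ∀ a ℓ : ℝ, 0 < ℓ → 2 * ℓ ≤ 2 * π →
      wInt ω (a - ℓ / 2) (2 * ℓ) ≤ ENNReal.ofReal M * wInt ω a ℓ)
    (hMN : M / 2 ^ ((N : ℝ) * p + 1) < 1) :
    ∃ c C : ℝ, 0 < c ∧ 0 < C ∧ ∀ a : ℂ, a ∈ unitDisk →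
      ENNReal.ofReal c *
          (wInt ω (Complex.arg a - (1 - ‖a‖) / 2) (1 - ‖a‖) /
            ENNReal.ofReal (1 - ‖a‖)) ≤
        lpNormP p ω (fun θ =>
          ((((1 - ‖a‖) ^ N : ℝ) : ℂ) /
            (1 - (starRingEnd ℂ) a * bpt θ) ^ ((N : ℂ) + 1 / (p : ℂ)))) ∧
      lpNormP p ω (fun θ =>
          ((((1 - ‖a‖) ^ N : ℝ) : ℂ) /
            (1 - (starRingEnd ℂ) a * bpt θ) ^ ((N : ℂ) + 1 / (p : ℂ)))) ≤
        ENNReal.ofReal C *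
          (wInt ω (Complex.arg a - (1 - ‖a‖) / 2) (1 - ‖a‖) /
            ENNReal.ofReal (1 - ‖a‖)) :=
  test_function_two_sided_estimate_general ω M p N hω hp hM hMN

end
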